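/- arXiv:2204.13831 — 3 statements merged into one kernel-verified Lean document; each statement's English description precedes it below -/
import Mathlib

section
/- Let q ≥ 1 be a fixed integer. For every even n = 2m with m ≥ q, the number of bad words satisfies D(n,q) ≤ (4(q−1)²/q) · (2 cos(π/(2q)))^n. Consequently, D(n,q)/2^n → 0 as n → ∞ along even integers (the fraction of bad words is negligible). -/
/-- The Hamming weight of a binary word `x ∈ {0,1}^N`: the number of ones. -/
def wt {N : ℕ} (x : Fin N → Bool) : ℕ :=
  (Finset.univ.filter (fun i => x i = true)).card

/-- `Flip x j` complements the first `j` bits of `x`. -/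
def Flip {N : ℕ} (x : Fin N → Bool) (j : ℕ) : Fin N → Bool :=
  fun i => if (i : ℕ) < j then !(x i) else x i

/-- `x ∈ {0,1}^{2m}` is bad if `T(x,q) = ∅` and `T(x̄,q) = ∅`. -/
def Bad (m q : ℕ) (x : Fin (2*m) → Bool) : Prop :=
  (∀ j ≤ 2*m, wt (Flip x j) ≠ m + q) ∧
  (∀ j ≤ 2*m, wt (Flip (fun i => !(x i)) j) ≠ m + q)

/-- `D m q` is the number of bad words in `{0,1}^{2m}`. -/
noncomputable def D (m q : ℕ) : ℕ := Nat.card {x : Fin (2*m) → Bool // Bad m q x}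

lemma wt_cast {N : ℕ} (x : Fin N → Bool) :
    (wt x : ℤ) = ∑ i : Fin N, (if x i = true then (1:ℤ) else 0) := by
  rw [wt, Finset.card_filter]
  push_cast
  rfl

lemma wt_le {N : ℕ} (x : Fin N → Bool) : wt x ≤ N := by
  classical
  calc wt x ≤ Finset.univ.card := Finset.card_filter_le _ _
  _ = N := by simp

lemma flip_zero {N : ℕ} (x : Fin N → Bool) : Flip x 0 = x := by
  funext i; simp [Flip]

lemma flip_all {N : ℕ} (x : Fin N → Bool) (j : ℕ) (hj : N ≤ j) :
    Flip x j = fun i => !(x i) := by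
  funext i; simp [Flip, lt_of_lt_of_le i.isLt hj]

lemma flip_compl {N : ℕ} (x : Fin N → Bool) (j : ℕ) :
    Flip (fun i => !(x i)) j = fun i => !(Flip x j i) := by
  funext i
  by_cases h : (i : ℕ) < j <;> simp [Flip, h]

lemma wt_not {N : ℕ} (x : Fin N → Bool) : (wt (fun i => !(x i)) : ℤ) = N - wt x := by
  classical
  have h : (Finset.univ.filter (fun i => x i = true)).card
      + (Finset.univ.filter (fun i => ¬ (x i = true))).card = N := by
    rw [Finset.card_filter_add_card_filter_not]; simp
  have h2 : wt (fun i => !(x i)) = (Finset.univ.filter (fun i => ¬ (x i = true))).card := by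
    rw [wt]; congr 1; apply Finset.filter_congr; intro i _; simp
  rw [h2]; rw [wt]; omega

lemma step_signed {N : ℕ} (x : Fin N → Bool) (j : ℕ) (hj : j < N) :
    (wt (Flip x (j+1)) : ℤ) = wt (Flip x j) + (if x ⟨j, hj⟩ = true then (-1:ℤ) else 1) := by
  classical
  set i0 : Fin N := ⟨j, hj⟩
  rw [wt_cast, wt_cast]
  rw [← Finset.add_sum_erase Finset.univ _ (Finset.mem_univ i0),
      ← Finset.add_sum_erase Finset.univ
        (fun i => if Flip x j i = true then (1:ℤ) else 0) (Finset.mem_univ i0)]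
  have hsum : ∑ i ∈ Finset.univ.erase i0, (if Flip x (j+1) i = true then (1:ℤ) else 0)
      = ∑ i ∈ Finset.univ.erase i0, (if Flip x j i = true then (1:ℤ) else 0) := by
    apply Finset.sum_congr rfl
    intro i hi
    have hne : (i:ℕ) ≠ j := by
      intro h; exact (Finset.mem_erase.mp hi).1 (Fin.ext h)
    have : ((i:ℕ) < j + 1) ↔ ((i:ℕ) < j) := by omega
    simp [Flip, this]
  rw [hsum]
  have h1 : Flip x (j+1) i0 = !(x i0) := by simp [Flip, i0]
  have h2 : Flip x j i0 = x i0 := by simp [Flip, i0]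
  rw [h1, h2]
  cases hx : x i0 <;> simp <;> ring

lemma ivt_up (u : ℕ → ℤ) (c : ℤ) :
    ∀ n : ℕ, (∀ k < n, u (k+1) = u k + 1 ∨ u (k+1) = u k - 1) →
    u 0 ≤ c → c ≤ u n → ∃ j ≤ n, u j = c := by
  intro n
  induction n with
  | zero => intro _ h0 hn; exact ⟨0, le_refl _, le_antisymm h0 hn⟩
  | succ n ih =>
    intro hstep h0 hn
    by_cases h : c ≤ u n
    · obtain ⟨j, hj, hju⟩ := ih (fun k hk => hstep k (by omega)) h0 h
      exact ⟨j, by omega, hju⟩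
    · have := hstep n (by omega)
      exact ⟨n+1, le_refl _, by omega⟩

lemma ivt_down (u : ℕ → ℤ) (c : ℤ) (n : ℕ)
    (hstep : ∀ k < n, u (k+1) = u k + 1 ∨ u (k+1) = u k - 1)
    (h0 : c ≤ u 0) (hn : u n ≤ c) : ∃ j ≤ n, u j = c := by
  obtain ⟨j, hj, hju⟩ := ivt_up (fun k => -u k) (-c) n
    (fun k hk => by rcases hstep k hk with h | h
                    · right; show -u (k+1) = -u k - 1; omega
                    · left; show -u (k+1) = -u k + 1; omega)
    (by show -u 0 ≤ -c; omega) (by show -c ≤ -u n; omega)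
  have : -u j = -c := hju
  exact ⟨j, hj, by omega⟩

def step (c : Bool) : ℤ := if c then -1 else 1

def good (q : ℕ) : List Bool → ℤ → ℤ → Bool
  | [], a, b => decide (0 < a) && decide (a < 2*q) && decide (a = b)
  | c :: t, a, b => decide (0 < a) && decide (a < 2*q) && good q t (a + step c) b

def f (q : ℕ) : ℕ → ℤ → ℤ → ℕ
  | 0, a, b => if 0 < a ∧ a < 2*q ∧ a = b then 1 else 0
  | n+1, a, b => if 0 < a ∧ a < 2*q then f q n (a-1) b + f q n (a+1) b else 0

def pos (a : ℤ) (l : List Bool) : ℤ := a + (l.count false : ℤ) - (l.count true : ℤ)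

lemma pos_nil (a : ℤ) : pos a [] = a := by simp [pos]

lemma pos_cons (a : ℤ) (c : Bool) (l : List Bool) :
    pos a (c :: l) = pos (a + step c) l := by
  cases c <;> simp [pos, step, List.count_cons] <;> ring

lemma pos_append_singleton (a : ℤ) (l : List Bool) (c : Bool) :
    pos a (l ++ [c]) = pos a l + step c := by
  cases c <;> simp [pos, step, List.count_append] <;> ring

lemma good_of (q : ℕ) : ∀ (l : List Bool) (a b : ℤ),
    (∀ j ≤ l.length, 0 < pos a (l.take j) ∧ pos a (l.take j) < 2*q) →
    pos a l = b → good q l a b = true := by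
  intro l
  induction l with
  | nil =>
    intro a b hstrip hend
    have h0 := hstrip 0 (by simp)
    simp only [List.take_nil, pos_nil] at h0
    simp only [pos_nil] at hend
    subst hend
    simp [good, h0.1, h0.2]
  | cons c t ih =>
    intro a b hstrip hend
    have h0 := hstrip 0 (by simp)
    simp only [List.take_zero, pos_nil] at h0
    have hrec : good q t (a + step c) b = true := by
      apply ih
      · intro j hj
        have := hstrip (j+1) (by simpa using Nat.succ_le_succ hj)
        simpa [List.take_succ_cons, pos_cons] using this
      · rw [← pos_cons]; exact hend
    simp [good, h0.1, h0.2, hrec]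

lemma count_le (q : ℕ) : ∀ (n : ℕ) (a b : ℤ),
    (Finset.univ.filter (fun x : Fin n → Bool => good q (List.ofFn x) a b = true)).card
      ≤ f q n a b := by
  intro n
  induction n with
  | zero =>
    intro a b
    by_cases h : good q (List.ofFn (fun i : Fin 0 => false)) a b = true
    · have hle : (Finset.univ.filter
          (fun x : Fin 0 → Bool => good q (List.ofFn x) a b = true)).card ≤ 1 := by
        apply le_trans (Finset.card_filter_le _ _)
        simp [Finset.card_univ]
      have : f q 0 a b = 1 := by
        simp only [List.ofFn_zero, good] at h
        simp only [Bool.and_eq_true, decide_eq_true_eq] at h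
        obtain ⟨⟨h1, h2⟩, h3⟩ := h
        subst h3
        simp [f, h1, h2]
      omega
    · have : (Finset.univ.filter
          (fun x : Fin 0 → Bool => good q (List.ofFn x) a b = true)).card = 0 := by
        rw [Finset.card_eq_zero, Finset.filter_eq_empty_iff]
        intro x _
        have : x = (fun i : Fin 0 => false) := by funext i; exact absurd i.isLt (by omega)
        rw [this]; exact h
      omega
  | succ n ih =>
    intro a b
    by_cases hstrip : 0 < a ∧ a < 2*q
    · -- split on x 0
      have hsplit : (Finset.univ.filter
            (fun x : Fin (n+1) → Bool => good q (List.ofFn x) a b = true)).card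
          = (Finset.univ.filter (fun x : Fin (n+1) → Bool =>
              good q (List.ofFn x) a b = true ∧ x 0 = true)).card
          + (Finset.univ.filter (fun x : Fin (n+1) → Bool =>
              good q (List.ofFn x) a b = true ∧ ¬ (x 0 = true))).card := by
        rw [← Finset.filter_filter, ← Finset.filter_filter,
          Finset.card_filter_add_card_filter_not]
      have key : ∀ c : Bool, (Finset.univ.filter (fun x : Fin (n+1) → Bool =>
              good q (List.ofFn x) a b = true ∧ x 0 = c)).card
          ≤ f q n (a + step c) b := by
        intro c
        have hinj : ∀ x ∈ Finset.univ.filter (fun x : Fin (n+1) → Bool =>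
            good q (List.ofFn x) a b = true ∧ x 0 = c),
            Fin.tail x ∈ Finset.univ.filter
              (fun t : Fin n → Bool => good q (List.ofFn t) (a + step c) b = true) := by
          intro x hx
          simp only [Finset.mem_filter, Finset.mem_univ, true_and] at hx ⊢
          obtain ⟨hg, hc⟩ := hx
          rw [List.ofFn_succ] at hg
          simp only [good, Bool.and_eq_true] at hg
          have := hg.2
          rw [hc] at this
          exact this
        calc (Finset.univ.filter (fun x : Fin (n+1) → Bool =>
              good q (List.ofFn x) a b = true ∧ x 0 = c)).card
            ≤ (Finset.univ.filter
              (fun t : Fin n → Bool => good q (List.ofFn t) (a + step c) b = true)).card := by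
              apply Finset.card_le_card_of_injOn Fin.tail hinj
              intro x hx y hy hxy
              simp only [Finset.mem_coe, Finset.mem_filter] at hx hy
              funext i
              rcases Fin.eq_zero_or_eq_succ i with h0 | ⟨i', rfl⟩
              · rw [h0, hx.2.2, hy.2.2]
              · exact congrFun hxy i'
          _ ≤ f q n (a + step c) b := ih _ _
      have h1 := key true
      have h2' : (Finset.univ.filter (fun x : Fin (n+1) → Bool =>
              good q (List.ofFn x) a b = true ∧ ¬ (x 0 = true))).card ≤ f q n (a + step false) b := by
        have := key false
        simpa using this
      have hf : f q (n+1) a b = f q n (a-1) b + f q n (a+1) b := by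
        simp [f, hstrip]
      have e1 : a + step true = a - 1 := by simp [step]; ring
      have e2 : a + step false = a + 1 := by simp [step]
      rw [e1] at h1
      rw [e2] at h2'
      rw [hsplit, hf]
      exact Nat.add_le_add h1 h2'
    · have hzero : ∀ x : Fin (n+1) → Bool, good q (List.ofFn x) a b = false := by
        intro x
        rw [List.ofFn_succ]
        show (decide (0 < a) && decide (a < 2*(q:ℤ)) && good q _ (a + step (x 0)) b) = false
        rcases not_and_or.mp hstrip with h | h <;> simp [h]
      have : (Finset.univ.filter
          (fun x : Fin (n+1) → Bool => good q (List.ofFn x) a b = true)).card = 0 := by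
        rw [Finset.card_eq_zero, Finset.filter_eq_empty_iff]
        intro x _
        intro hc
        rw [hzero x] at hc
        exact Bool.false_ne_true hc
      rw [this]
      exact Nat.zero_le _

lemma f_zero (q : ℕ) (n : ℕ) (a b : ℤ) (h : ¬ (0 < a ∧ a < 2*q)) : f q n a b = 0 := by
  cases n with
  | zero => rw [f]; rw [if_neg]; tauto
  | succ n => rw [f]; rw [if_neg h]

noncomputable def wgt (q : ℕ) (i : ℤ) : ℝ := Real.sin (i * (Real.pi / (2*q)))

noncomputable def lam (q : ℕ) : ℝ := 2 * Real.cos (Real.pi / (2*q))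

lemma wgt_pos (q : ℕ) (hq : 1 ≤ q) (i : ℤ) (h1 : 0 < i) (h2 : i < 2*q) : 0 < wgt q i := by
  have hqpos : (0:ℝ) < q := by exact_mod_cast hq
  have hθ : 0 < Real.pi / (2*q) := by positivity
  apply Real.sin_pos_of_pos_of_lt_pi
  · have : (0:ℝ) < i := by exact_mod_cast h1
    positivity
  · have hi : (i:ℝ) < 2*q := by exact_mod_cast h2
    calc (i:ℝ) * (Real.pi / (2*q)) < (2*q) * (Real.pi / (2*q)) := by
          apply mul_lt_mul_of_pos_right hi hθ
      _ = Real.pi := by field_simp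

lemma wgt_zero (q : ℕ) : wgt q 0 = 0 := by simp [wgt]

lemma wgt_two_q (q : ℕ) (hq : 1 ≤ q) : wgt q (2*q) = 0 := by
  have hqpos : (0:ℝ) < q := by exact_mod_cast hq
  have : ((2*q : ℤ) : ℝ) * (Real.pi / (2*q)) = Real.pi := by
    push_cast
    field_simp
  rw [wgt, this, Real.sin_pi]

lemma wgt_rec (q : ℕ) (i : ℤ) : wgt q (i-1) + wgt q (i+1) = lam q * wgt q i := by
  rw [wgt, wgt, wgt, lam]
  push_cast
  rw [sub_mul, add_mul, one_mul, Real.sin_sub, Real.sin_add]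
  ring

lemma wgt_sym (q : ℕ) (hq : 1 ≤ q) (a : ℤ) : wgt q (2*q - a) = wgt q a := by
  have hqpos : (0:ℝ) < q := by exact_mod_cast hq
  have : ((2*q - a : ℤ) : ℝ) * (Real.pi / (2*q)) = Real.pi - a * (Real.pi / (2*q)) := by
    push_cast
    field_simp
  rw [wgt, this, Real.sin_pi_sub, wgt]

lemma lam_nonneg (q : ℕ) (hq : 1 ≤ q) : 0 ≤ lam q := by
  have hqpos : (0:ℝ) < q := by exact_mod_cast hq
  have h1 : 0 ≤ Real.pi / (2*q) := by positivity
  have h2 : Real.pi / (2*q) ≤ Real.pi / 2 := by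
    apply div_le_div_of_nonneg_left Real.pi_pos.le (by norm_num)
    have : (1:ℝ) ≤ q := by exact_mod_cast hq
    linarith
  have := Real.cos_nonneg_of_mem_Icc (x := Real.pi / (2*q))
    ⟨by linarith, h2⟩
  rw [lam]
  linarith

lemma f_bound (q : ℕ) (hq : 1 ≤ q) : ∀ (n : ℕ) (a b : ℤ), 0 < a → a < 2*q →
    (f q n a b : ℝ) * wgt q b ≤ (lam q)^n * wgt q a := by
  intro n
  induction n with
  | zero =>
    intro a b h1 h2
    by_cases h : a = b
    · subst h
      rw [f, if_pos ⟨h1, h2, rfl⟩]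
      simp
    · rw [f, if_neg (by tauto)]
      simp only [Nat.cast_zero, zero_mul, pow_zero, one_mul]
      exact (wgt_pos q hq a h1 h2).le
  | succ n ih =>
    intro a b h1 h2
    have key : ∀ c : ℤ, c = a - 1 ∨ c = a + 1 →
        (f q n c b : ℝ) * wgt q b ≤ (lam q)^n * wgt q c := by
      intro c hc
      by_cases hcs : 0 < c ∧ c < 2*q
      · exact ih c b hcs.1 hcs.2
      · have hzero : f q n c b = 0 := f_zero q n c b hcs
        have hw : wgt q c = 0 := by
          rcases hc with rfl | rfl
          · have : a - 1 = 0 := by omega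
            rw [this, wgt_zero]
          · have : a + 1 = 2*q := by omega
            rw [this, wgt_two_q q hq]
        rw [hzero, hw]
        simp
    have e1 := key (a-1) (Or.inl rfl)
    have e2 := key (a+1) (Or.inr rfl)
    rw [f, if_pos ⟨h1, h2⟩]
    push_cast
    calc ((f q n (a-1) b : ℝ) + (f q n (a+1) b : ℝ)) * wgt q b
        = (f q n (a-1) b : ℝ) * wgt q b + (f q n (a+1) b : ℝ) * wgt q b := by ring
      _ ≤ (lam q)^n * wgt q (a-1) + (lam q)^n * wgt q (a+1) := add_le_add e1 e2
      _ = (lam q)^n * (wgt q (a-1) + wgt q (a+1)) := by ring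
      _ = (lam q)^n * (lam q * wgt q a) := by rw [wgt_rec]
      _ = (lam q)^(n+1) * wgt q a := by ring

lemma f_le_pow (q : ℕ) (hq : 1 ≤ q) (n : ℕ) (a : ℤ) (h1 : 0 < a) (h2 : a < 2*q) :
    (f q n a (2*q - a) : ℝ) ≤ (lam q)^n := by
  have hwa : 0 < wgt q a := wgt_pos q hq a h1 h2
  have hb := f_bound q hq n a (2*q - a) h1 h2
  rw [wgt_sym q hq a] at hb
  calc (f q n a (2*q - a) : ℝ) = (f q n a (2*q - a) : ℝ) * wgt q a / wgt q a := by
        field_simp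
    _ ≤ (lam q)^n * wgt q a / wgt q a := div_le_div_of_nonneg_right hb hwa.le
    _ = (lam q)^n := by field_simp

-- q = 2 exact computations
lemma f2_22 (n : ℕ) : f 2 (n+2) 2 2 = 2 * f 2 n 2 2 := by
  have h1 : f 2 (n+1) 1 2 = f 2 n 0 2 + f 2 n 2 2 := by
    rw [f]; norm_num
  have h2 : f 2 (n+1) 3 2 = f 2 n 2 2 + f 2 n 4 2 := by
    rw [f]; norm_num
  have h3 : f 2 n 0 2 = 0 := f_zero 2 n 0 2 (by norm_num)
  have h4 : f 2 n 4 2 = 0 := f_zero 2 n 4 2 (by norm_num)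
  rw [show n+2 = (n+1)+1 from rfl, f]
  norm_num [h1, h2, h3, h4]
  omega

lemma f2_2b (n : ℕ) (b : ℤ) : f 2 (n+2) 2 b = 2 * f 2 n 2 b := by
  have h1 : f 2 (n+1) 1 b = f 2 n 0 b + f 2 n 2 b := by
    rw [f]; norm_num
  have h2 : f 2 (n+1) 3 b = f 2 n 2 b + f 2 n 4 b := by
    rw [f]; norm_num
  have h3 : f 2 n 0 b = 0 := f_zero 2 n 0 b (by norm_num)
  have h4 : f 2 n 4 b = 0 := f_zero 2 n 4 b (by norm_num)
  rw [show n+2 = (n+1)+1 from rfl, f]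
  norm_num [h1, h2, h3, h4]
  omega

lemma f2_2b_even (b : ℤ) : ∀ m : ℕ, f 2 (2*m) 2 b = 2^m * f 2 0 2 b := by
  intro m
  induction m with
  | zero => simp
  | succ m ih =>
    have : 2*(m+1) = (2*m)+2 := by ring
    rw [this, f2_2b, ih]
    ring

lemma f2_2b_odd (b : ℤ) : ∀ m : ℕ, f 2 (2*m+1) 2 b = 2^m * f 2 1 2 b := by
  intro m
  induction m with
  | zero => simp
  | succ m ih =>
    have : 2*(m+1)+1 = (2*m+1)+2 := by ring
    rw [this, f2_2b, ih]
    ring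

lemma q2_total (m : ℕ) (hm : 1 ≤ m) :
    f 2 (2*m) 1 3 + f 2 (2*m) 2 2 + f 2 (2*m) 3 1 = 2^(m+1) := by
  -- f(2m) 2 2 = 2^m
  have h22 : f 2 (2*m) 2 2 = 2^m := by
    have := f2_2b_even 2 m
    rw [this]
    norm_num [f]
  obtain ⟨k, rfl⟩ : ∃ k, m = k + 1 := ⟨m-1, by omega⟩
  have e1 : 2*(k+1) = (2*k+1)+1 := by ring
  have h13 : f 2 (2*(k+1)) 1 3 = 2^k := by
    rw [e1, f]
    norm_num
    have h0 : f 2 (2*k+1) 0 3 = 0 := f_zero 2 _ 0 3 (by norm_num)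
    have h2 : f 2 (2*k+1) 2 3 = 2^k * f 2 1 2 3 := f2_2b_odd 3 k
    have hb : f 2 1 2 3 = 1 := by
      rw [f]
      norm_num [f]
    rw [h0, h2, hb]
    omega
  have h31 : f 2 (2*(k+1)) 3 1 = 2^k := by
    rw [e1, f]
    norm_num
    have h4 : f 2 (2*k+1) 4 1 = 0 := f_zero 2 _ 4 1 (by norm_num)
    have h2 : f 2 (2*k+1) 2 1 = 2^k * f 2 1 2 1 := f2_2b_odd 1 k
    have hb : f 2 1 2 1 = 1 := by
      rw [f]
      norm_num [f]
    rw [h4, h2, hb]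
    omega
  rw [h13, h22, h31]
  ring

lemma lam_one : lam 1 = 0 := by
  rw [lam]
  norm_num

lemma lam_two_sq : (lam 2)^2 = 2 := by
  rw [lam]
  norm_num
  have h : (2:ℝ) * (Real.sqrt 2 / 2) = Real.sqrt 2 := by ring
  rw [h, Real.sq_sqrt]
  norm_num


lemma strip_of_bad (m q : ℕ) (hq : 1 ≤ q) (hm : q ≤ m) (x : Fin (2*m) → Bool)
    (hx : Bad m q x) :
    ∀ j ≤ 2*m, (m:ℤ) - q < (wt (Flip x j) : ℤ) ∧ (wt (Flip x j) : ℤ) < m + q := by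
  set u : ℕ → ℤ := fun j => (wt (Flip x j) : ℤ) with hu
  have hne1 : ∀ j ≤ 2*m, u j ≠ (m:ℤ) + q := by
    intro j hj h
    apply hx.1 j hj
    have : (wt (Flip x j) : ℤ) = ((m + q : ℕ) : ℤ) := by push_cast; exact h
    exact_mod_cast this
  have hne2 : ∀ j ≤ 2*m, u j ≠ (m:ℤ) - q := by
    intro j hj h
    apply hx.2 j hj
    have hc : (wt (Flip (fun i => !(x i)) j) : ℤ) = 2*m - wt (Flip x j) := by
      rw [flip_compl, wt_not]
      push_cast; ring
    have : (wt (Flip (fun i => !(x i)) j) : ℤ) = ((m + q : ℕ) : ℤ) := by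
      rw [hc]
      push_cast
      have := h
      simp only [hu] at this
      omega
    exact_mod_cast this
  have hstep : ∀ k < 2*m, u (k+1) = u k + 1 ∨ u (k+1) = u k - 1 := by
    intro k hk
    have := step_signed x k hk
    by_cases hc : x ⟨k, hk⟩ = true
    · right; rw [if_pos hc] at this; simp only [hu]; omega
    · left; rw [if_neg hc] at this; simp only [hu]; omega
  have h2m : u (2*m) = 2*m - u 0 := by
    simp only [hu]
    rw [flip_all x (2*m) (le_refl _), flip_zero, wt_not]
    push_cast; ring
  have hwt0 : 0 ≤ u 0 := by simp only [hu]; positivity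
  have h0lt : u 0 < (m:ℤ) + q := by
    by_contra h
    push_neg at h
    obtain ⟨j, hj, hje⟩ := ivt_down u ((m:ℤ)+q) (2*m) hstep h (by omega)
    exact hne1 j hj hje
  have h0gt : (m:ℤ) - q < u 0 := by
    by_contra h
    push_neg at h
    obtain ⟨j, hj, hje⟩ := ivt_up u ((m:ℤ)+q) (2*m) hstep (by omega) (by omega)
    exact hne1 j hj hje
  intro j hj
  constructor
  · by_contra h
    push_neg at h
    obtain ⟨j', hj', hje⟩ := ivt_down u ((m:ℤ)-q) j
      (fun k hk => hstep k (by omega)) (by omega) (by exact h)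
    exact hne2 j' (by omega) hje
  · by_contra h
    push_neg at h
    obtain ⟨j', hj', hje⟩ := ivt_up u ((m:ℤ)+q) j
      (fun k hk => hstep k (by omega)) (by omega) (by exact h)
    exact hne1 j' (by omega) hje

lemma pos_ofFn (m q : ℕ) (x : Fin (2*m) → Bool) :
    ∀ j ≤ 2*m, pos ((wt x : ℤ) - m + q) ((List.ofFn x).take j)
      = (wt (Flip x j) : ℤ) - m + q := by
  intro j
  induction j with
  | zero =>
    intro _
    simp [pos_nil, flip_zero]
  | succ j ih =>
    intro hj
    have hjlt : j < 2*m := by omega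
    have hget : (List.ofFn x)[j]? = some (x ⟨j, hjlt⟩) := by
      rw [List.getElem?_eq_getElem (by simp [hjlt])]
      simp
    rw [List.take_succ, hget]
    simp only [Option.toList_some]
    rw [pos_append_singleton, ih (by omega)]
    have := step_signed x j hjlt
    have hst : step (x ⟨j, hjlt⟩) = (if x ⟨j, hjlt⟩ = true then (-1:ℤ) else 1) := by
      by_cases hc : x ⟨j, hjlt⟩ = true <;> simp [step, hc]
    rw [hst]
    omega

lemma D_le_sum (m q : ℕ) (hq : 1 ≤ q) (hm : q ≤ m) :
    D m q ≤ ∑ a ∈ Finset.Icc (1:ℤ) (2*q-1), f q (2*m) a (2*q-a) := by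
  classical
  set s : Finset (Fin (2*m) → Bool) :=
    (Finset.Icc (1:ℤ) (2*q-1)).biUnion
      (fun a => Finset.univ.filter
        (fun x : Fin (2*m) → Bool => good q (List.ofFn x) a (2*q-a) = true)) with hs
  have hmem : ∀ x : Fin (2*m) → Bool, Bad m q x → x ∈ s := by
    intro x hx
    have hstrip := strip_of_bad m q hq hm x hx
    have h0 := hstrip 0 (by omega)
    rw [flip_zero] at h0
    set a : ℤ := (wt x : ℤ) - m + q with ha
    rw [hs]
    apply Finset.mem_biUnion.mpr
    refine ⟨a, ?_, ?_⟩
    · rw [Finset.mem_Icc]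
      constructor <;> [skip; skip] <;> omega
    · rw [Finset.mem_filter]
      refine ⟨Finset.mem_univ x, ?_⟩
      apply good_of
      · intro j hj
        rw [List.length_ofFn] at hj
        rw [pos_ofFn m q x j hj]
        have := hstrip j hj
        constructor <;> omega
      · have hfull : (List.ofFn x) = (List.ofFn x).take (2*m) := by
          rw [List.take_of_length_le (by simp)]
        rw [hfull, pos_ofFn m q x (2*m) (le_refl _)]
        have h2m : (wt (Flip x (2*m)) : ℤ) = 2*m - wt x := by
          rw [flip_all x (2*m) (le_refl _), wt_not]
          push_cast; ring
        rw [h2m]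
        ring
  have step1 : D m q ≤ s.card := by
    have hinj : Function.Injective
        (fun y : {x : Fin (2*m) → Bool // Bad m q x} => (⟨y.1, hmem y.1 y.2⟩ : {x // x ∈ s})) := by
      intro y z h
      apply Subtype.ext
      simpa [Subtype.ext_iff] using h
    calc D m q ≤ Nat.card {x // x ∈ s} := Nat.card_le_card_of_injective _ hinj
      _ = s.card := Nat.card_eq_finsetCard s
  calc D m q ≤ s.card := step1
    _ ≤ ∑ a ∈ Finset.Icc (1:ℤ) (2*q-1),
        (Finset.univ.filter
          (fun x : Fin (2*m) → Bool => good q (List.ofFn x) a (2*q-a) = true)).card :=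
        Finset.card_biUnion_le
    _ ≤ ∑ a ∈ Finset.Icc (1:ℤ) (2*q-1), f q (2*m) a (2*q-a) := by
        apply Finset.sum_le_sum
        intro a _
        exact count_le q (2*m) a (2*q-a)

lemma key_bound (q : ℕ) (hq : 1 ≤ q) (m : ℕ) (hm : q ≤ m) :
    (D m q : ℝ) ≤ (4 * ((q : ℝ) - 1)^2 / q) * (lam q)^(2*m) := by
  have hD : (D m q : ℝ) ≤ ∑ a ∈ Finset.Icc (1:ℤ) (2*q-1), (f q (2*m) a (2*q-a) : ℝ) := by
    have := D_le_sum m q hq hm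
    calc (D m q : ℝ) ≤ ((∑ a ∈ Finset.Icc (1:ℤ) (2*q-1), f q (2*m) a (2*q-a) : ℕ) : ℝ) := by
          exact_mod_cast this
      _ = ∑ a ∈ Finset.Icc (1:ℤ) (2*q-1), (f q (2*m) a (2*q-a) : ℝ) := by push_cast; rfl
  rcases lt_trichotomy q 2 with h1 | h2 | h3
  · -- q = 1
    have hq1 : q = 1 := by omega
    subst hq1
    have hIcc : Finset.Icc (1:ℤ) (2*1-1) = {1} := by decide
    have hsum : ∑ a ∈ Finset.Icc (1:ℤ) (2*(1:ℕ)-1), (f 1 (2*m) a (2*(1:ℕ)-a) : ℝ)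
        = (f 1 (2*m) 1 1 : ℝ) := by
      norm_num
    rw [hsum] at hD
    have hf := f_le_pow 1 (le_refl 1) (2*m) 1 (by norm_num) (by norm_num)
    have h1e : (2*(1:ℕ) - (1:ℤ)) = 1 := by norm_num
    rw [h1e] at hf
    have hlam : (lam 1)^(2*m) = 0 := by
      rw [lam_one]
      exact zero_pow (by omega)
    rw [hlam] at hf
    have : (D m 1 : ℝ) ≤ 0 := le_trans hD hf
    have hr : (4 * ((1:ℕ) - 1 : ℝ)^2 / (1:ℕ)) * (lam 1)^(2*m) = 0 := by
      norm_num
    rw [hr]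
    exact this
  · -- q = 2
    subst h2
    have hIcc : Finset.Icc (1:ℤ) (2*(2:ℕ)-1) = {1, 2, 3} := by decide
    rw [hIcc] at hD
    have hsum : ∑ a ∈ ({1, 2, 3} : Finset ℤ), (f 2 (2*m) a (2*(2:ℕ)-a) : ℝ)
        = (f 2 (2*m) 1 3 : ℝ) + (f 2 (2*m) 2 2 : ℝ) + (f 2 (2*m) 3 1 : ℝ) := by
      rw [Finset.sum_insert (by decide), Finset.sum_insert (by decide),
        Finset.sum_singleton]
      norm_num
      ring
    rw [hsum] at hD
    have htot := q2_total m (by omega)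
    have hlam : (lam 2)^(2*m) = 2^m := by
      rw [pow_mul, lam_two_sq]
    rw [hlam]
    have hrhs : (4 * ((2:ℕ) - 1 : ℝ)^2 / (2:ℕ)) * (2:ℝ)^m = 2^(m+1) := by
      push_cast
      ring
    rw [hrhs]
    calc (D m 2 : ℝ) ≤ (f 2 (2*m) 1 3 : ℝ) + (f 2 (2*m) 2 2 : ℝ) + (f 2 (2*m) 3 1 : ℝ) := hD
      _ = ((f 2 (2*m) 1 3 + f 2 (2*m) 2 2 + f 2 (2*m) 3 1 : ℕ) : ℝ) := by push_cast; ring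
      _ = ((2^(m+1) : ℕ) : ℝ) := by rw [htot]
      _ = 2^(m+1) := by push_cast; rfl
  · -- q ≥ 3
    have hlamnn : 0 ≤ (lam q)^(2*m) := pow_nonneg (lam_nonneg q hq) _
    have hqR : (3:ℝ) ≤ q := by exact_mod_cast h3
    have hsum : ∑ a ∈ Finset.Icc (1:ℤ) (2*q-1), (f q (2*m) a (2*q-a) : ℝ)
        ≤ (2*q-1 : ℝ) * (lam q)^(2*m) := by
      have hcard : ((Finset.Icc (1:ℤ) (2*q-1)).card : ℝ) = (2*q-1 : ℝ) := by
        rw [Int.card_Icc]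
        have : ((2*q : ℤ) - 1 + 1 - 1).toNat = 2*q - 1 := by omega
        rw [this]
        have hq' : 1 ≤ 2*q := by omega
        push_cast [Nat.cast_sub hq']
        ring
      calc ∑ a ∈ Finset.Icc (1:ℤ) (2*q-1), (f q (2*m) a (2*q-a) : ℝ)
          ≤ ∑ a ∈ Finset.Icc (1:ℤ) (2*q-1), (lam q)^(2*m) := by
            apply Finset.sum_le_sum
            intro a ha
            rw [Finset.mem_Icc] at ha
            exact f_le_pow q hq (2*m) a (by omega) (by omega)
        _ = ((Finset.Icc (1:ℤ) (2*q-1)).card : ℝ) * (lam q)^(2*m) := by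
            rw [Finset.sum_const, nsmul_eq_mul]
        _ = (2*q-1 : ℝ) * (lam q)^(2*m) := by rw [hcard]
    have hconst : (2*(q:ℝ)-1) ≤ 4 * ((q:ℝ)-1)^2 / q := by
      rw [le_div_iff₀ (by linarith : (0:ℝ) < q)]
      nlinarith
    calc (D m q : ℝ) ≤ (2*(q:ℝ)-1) * (lam q)^(2*m) := le_trans hD hsum
      _ ≤ (4 * ((q:ℝ)-1)^2 / q) * (lam q)^(2*m) :=
          mul_le_mul_of_nonneg_right hconst hlamnn

/-- for fixed `q ≥ 1`, the upper bound
`D(n,q) ≤ (4(q−1)²/q)·(2cos(π/(2q)))ⁿ` for all even `n = 2m` with `m ≥ q`,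
and consequently `D(n,q)/2ⁿ → 0` along even integers. -/
theorem stmt3 (q : ℕ) (hq : 1 ≤ q) :
    (∀ m, q ≤ m →
      (D m q : ℝ) ≤ (4 * ((q : ℝ) - 1)^2 / q) * (2 * Real.cos (Real.pi / (2*q)))^(2*m)) ∧
    Filter.Tendsto (fun m : ℕ => (D m q : ℝ) / 2^(2*m)) Filter.atTop (nhds 0) := by
  have hkey : ∀ m, q ≤ m →
      (D m q : ℝ) ≤ (4 * ((q : ℝ) - 1)^2 / q) * (2 * Real.cos (Real.pi / (2*q)))^(2*m) := by
    intro m hm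
    have := key_bound q hq m hm
    simpa [lam] using this
  refine ⟨hkey, ?_⟩
  set C : ℝ := 4 * ((q : ℝ) - 1)^2 / q with hC
  have hqR : (1:ℝ) ≤ q := by exact_mod_cast hq
  have hCnn : 0 ≤ C := by positivity
  set c : ℝ := Real.cos (Real.pi / (2*q)) with hc
  have hθpos : 0 < Real.pi / (2*(q:ℝ)) := by positivity
  have hθle : Real.pi / (2*(q:ℝ)) ≤ Real.pi / 2 := by
    apply div_le_div_of_nonneg_left Real.pi_pos.le (by norm_num)
    linarith
  have hcnn : 0 ≤ c := Real.cos_nonneg_of_mem_Icc ⟨by linarith, hθle⟩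
  have hclt : c < 1 := by
    have := Real.cos_lt_cos_of_nonneg_of_le_pi (le_refl 0)
      (by linarith [Real.pi_pos] : Real.pi / (2*(q:ℝ)) ≤ Real.pi) hθpos
    rw [Real.cos_zero] at this
    exact this
  set r : ℝ := c^2 with hr
  have hrnn : 0 ≤ r := by positivity
  have hrlt : r < 1 := by nlinarith
  have htend : Filter.Tendsto (fun m : ℕ => C * r^m) Filter.atTop (nhds 0) := by
    have := (tendsto_pow_atTop_nhds_zero_of_lt_one hrnn hrlt).const_mul C
    simpa using this
  apply squeeze_zero' (Filter.Eventually.of_forall (fun m => by positivity)) ?_ htend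
  rw [Filter.eventually_atTop]
  refine ⟨q, fun m hm => ?_⟩
  have hkm := hkey m hm
  have h2pos : (0:ℝ) < 2^(2*m) := by positivity
  calc (D m q : ℝ) / 2^(2*m) ≤ (C * (2*c)^(2*m)) / 2^(2*m) := by
        apply div_le_div_of_nonneg_right hkm h2pos.le
    _ = C * r^m := by
        rw [mul_div_assoc]
        congr 1
        rw [mul_pow, pow_mul]
        field_simp
        ring
  done
end

section
/- Let n = 2m be even and let q be an integer with 0 ≤ q ≤ m. For every c ∈ B(n,q), Γ_q^{(A)}(c) = {i ∈ {0,…,n} : R(c)_i ≠ R(c)_j for all j < i}, where R(c) is the running sum of c. -/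
/-- The running sum `R(x)`: `R(x)₀ = 0` and `R(x)ᵢ = R(x)_{i−1} ± 1`
according to whether the `i`-th bit is `1` or `0`. -/
def RS {N : ℕ} (x : Fin N → Bool) : ℕ → ℤ
  | 0 => 0
  | i + 1 => RS x i + if h : i < N then (if x ⟨i, h⟩ then 1 else -1) else 0

open Finset

variable {N : ℕ}

lemma RS_eq_sum (x : Fin N → Bool) (j : ℕ) :
    RS x j = ∑ k : Fin N, if (k : ℕ) < j then (if x k then 1 else -1) else 0 := by
  induction j with
  | zero => simp [RS]
  | succ j ih =>
    have last_term : (∑ k : Fin N, if (k : ℕ) = j then (if x k then 1 else -1) else 0 : ℤ) =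
        if h : j < N then (if x ⟨j, h⟩ then 1 else -1) else 0 := by
      by_cases h : j < N
      · rw [dif_pos h, sum_eq_single ⟨j, h⟩
          (fun k _ hk => if_neg fun e => hk (Fin.ext e)) (by simp)]
        simp
      · rw [dif_neg h]
        exact sum_eq_zero fun k _ => if_neg (by have := k.isLt; omega)
    rw [RS, ih, ← last_term, ← sum_add_distrib]
    refine sum_congr rfl fun k _ => ?_
    split_ifs <;> omega

lemma wt_Flip (x : Fin N → Bool) (j : ℕ) : (wt (Flip x j) : ℤ) = wt x - RS x j := by
  simp only [wt, natCast_card_filter, RS_eq_sum, ← sum_sub_distrib]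
  refine sum_congr rfl fun k _ => ?_
  by_cases hk : (k : ℕ) < j <;> cases h : x k <;> simp [Flip, hk, h]

lemma RS_Flip (c : Fin N → Bool) (i j : ℕ) : RS (Flip c i) j = RS c j - 2 * RS c (min i j) := by
  simp only [RS_eq_sum, mul_sum, ← sum_sub_distrib]
  refine sum_congr rfl fun k _ => ?_
  by_cases hj : (k : ℕ) < j <;> by_cases hi : (k : ℕ) < i <;> cases h : c k <;>
    simp [Flip, hi, hj, h]

lemma Flip_Flip_self (x : Fin N → Bool) (j : ℕ) : Flip (Flip x j) j = x := by
  funext k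
  by_cases hk : (k : ℕ) < j <;> simp [Flip, hk]

lemma wt_Flip_Flip_eq_wt_iff (c : Fin N → Bool) (i j : ℕ) :
    wt (Flip (Flip c i) j) = wt c ↔ RS c j = RS c i := by
  have h := wt_Flip (Flip c i) j
  rw [wt_Flip c i, RS_Flip] at h
  zify
  rcases le_total i j with hij | hji
  · rw [min_eq_left hij] at h; omega
  · rw [min_eq_right hji] at h; omega

/-- `i ∈ Γ_q^{(A)}(c)` is encoded with `x = Flip c i`: `i ∈ T(x,q)` and `i = min T(x,q)`. -/
theorem stmt6_general (m q : ℕ) (c : Fin (2*m) → Bool) (hc : wt c = m + q) (i : ℕ) :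
    (i ≤ 2*m ∧ wt (Flip (Flip c i) i) = m + q ∧
      ∀ j ≤ 2*m, wt (Flip (Flip c i) j) = m + q → i ≤ j) ↔
    (i ≤ 2*m ∧ ∀ j < i, RS c i ≠ RS c j) := by
  rw [Flip_Flip_self, ← hc]
  simp only [wt_Flip_Flip_eq_wt_iff, true_and]
  constructor
  · rintro ⟨hi, hmin⟩
    exact ⟨hi, fun j hji hij => absurd (hmin j (by omega) hij.symm) (by omega)⟩
  · rintro ⟨hi, hnew⟩
    exact ⟨hi, fun j _ hji => not_lt.mp fun hlt => hnew j hlt hji.symm⟩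

/-- for `c ∈ B(n,q)`, the index `i` belongs to `Γ_q^{(A)}(c)`
(i.e. `x = Flip(c,i)` has `i ∈ T(x,q)` and `i = min T(x,q)`) iff
`i ∈ {0,…,n}` and `R(c)_i ≠ R(c)_j` for all `j < i`. -/
theorem stmt6 (m q : ℕ) (hq : q ≤ m) (c : Fin (2*m) → Bool) (hc : wt c = m + q) (i : ℕ) :
    (i ≤ 2*m ∧ wt (Flip (Flip c i) i) = m + q ∧
      ∀ j ≤ 2*m, wt (Flip (Flip c i) j) = m + q → i ≤ j) ↔
    (i ≤ 2*m ∧ ∀ j < i, RS c i ≠ RS c j) :=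
  stmt6_general m q c hc i
end

section
/- Let n = 2m and let C ⊆ {0,1}^{n−1} be a linear code over F₂ (closed under coordinatewise addition) that is closed under cyclic shifts and has minimum Hamming distance d between distinct codewords. For x ∈ C with T_C(x) ≠ ∅, let τ(x) = min T_C(x), let c(x) = Flip_c(σ(x, τ(x))), and let c'(x) ∈ {0,1}^n be c(x) with one bit appended: a 1 if wt(c(x)) = m−1 and a 0 if wt(c(x)) = m. Then every such c'(x) is balanced (has weight exactly m), and for any x, y ∈ C with T_C(x) ≠ ∅ and T_C(y) ≠ ∅, if c'(x) ≠ c'(y) then the Hamming distance between c'(x) and c'(y) is at least 2⌈d/2⌉. -/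
/-- `cyc x i` is the cyclic right shift of `x` by `i` positions. -/
def cyc {N : ℕ} (x : Fin N → Bool) (i : ℕ) : Fin N → Bool :=
  fun j => x ⟨((j : ℕ) + (N - i % N)) % N, Nat.mod_lt _ j.pos⟩

/-- `j ∈ T_C(x)`: `j ∈ {0,…,n−2}` and `wt(Flip_c(σ(x,j))) ∈ {m−1, m}`,
where `Flip_c` complements the first `m` bits. -/
def TCmem (m : ℕ) (x : Fin (2*m-1) → Bool) (j : ℕ) : Prop :=
  j ≤ 2*m - 2 ∧ (wt (Flip (cyc x j) m) = m - 1 ∨ wt (Flip (cyc x j) m) = m)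

/-- Append one bit to `c ∈ {0,1}^{2m−1}`: a `1` if `wt c = m−1`
and a `0` if `wt c = m`. -/
def extend (m : ℕ) (c : Fin (2*m-1) → Bool) : Fin (2*m) → Bool :=
  fun i => if h : (i : ℕ) < 2*m - 1 then c ⟨i, h⟩ else decide (wt c = m - 1)


/-!
Cyclic shifts of codewords are codewords, and complementing the same prefix of two words
preserves their Hamming distance, so two encoded words before the appended bit are at distance
at least `d`, and appending a bit cannot decrease it. The appended bit makes both encoded words
balanced, and two words of equal weight are at even distance; an even number `≥ d` is
`≥ 2⌈d/2⌉`.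
-/

open Finset

lemma wt_eq_sum {N : ℕ} (x : Fin N → Bool) : wt x = ∑ i, if x i then 1 else 0 := by
  simp only [wt, card_filter]

lemma hammingDist_flip {N : ℕ} (a b : Fin N → Bool) (j : ℕ) :
    hammingDist (Flip a j) (Flip b j) = hammingDist a b := by
  unfold hammingDist Flip
  congr 1
  refine filter_congr fun i _ => ?_
  by_cases hi : (i : ℕ) < j <;> simp [hi]

lemma hammingDist_add_two_mul_wt_and {N : ℕ} (a b : Fin N → Bool) :
    hammingDist a b + 2 * wt (fun i => a i && b i) = wt a + wt b := by
  simp only [hammingDist, card_filter, wt_eq_sum, mul_sum, ← sum_add_distrib]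
  refine sum_congr rfl fun i _ => ?_
  cases a i <;> cases b i <;> rfl

lemma even_hammingDist_of_wt_eq {N : ℕ} {a b : Fin N → Bool} (h : wt a = wt b) :
    Even (hammingDist a b) :=
  ⟨wt a - wt (fun i => a i && b i), by have := hammingDist_add_two_mul_wt_and a b; omega⟩

lemma hammingDist_comp_le_of_injective {ι κ β : Type*} [Fintype ι] [Fintype κ] [DecidableEq β]
    {g : ι → κ} (hg : Function.Injective g) (a b : κ → β) :
    hammingDist (a ∘ g) (b ∘ g) ≤ hammingDist a b :=
  card_le_card_of_injOn g (fun i hi => by simpa using hi) hg.injOn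

lemma extend_comp_castLE (m : ℕ) (c : Fin (2*m-1) → Bool) :
    extend m c ∘ Fin.castLE (Nat.sub_le _ _) = c := by
  funext i
  simp [extend]

lemma hammingDist_le_hammingDist_extend (m : ℕ) (c c' : Fin (2*m-1) → Bool) :
    hammingDist c c' ≤ hammingDist (extend m c) (extend m c') := by
  simpa only [extend_comp_castLE] using
    hammingDist_comp_le_of_injective (Fin.castLE_injective (Nat.sub_le (2*m) 1))
      (extend m c) (extend m c')

lemma wt_extend {m : ℕ} (hm : 1 ≤ m) (c : Fin (2*m-1) → Bool) :
    wt (extend m c) = wt c + if wt c = m - 1 then 1 else 0 := by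
  have hlen : 2*m = (2*m-1) + 1 := by omega
  have hlast : extend m c (finCongr hlen.symm (Fin.last _)) = decide (wt c = m - 1) := by
    simp [extend]
  rw [wt_eq_sum (extend m c), ← Equiv.sum_comp (finCongr hlen.symm), Fin.sum_univ_castSucc, hlast,
    wt_eq_sum c]
  congr 1
  · refine sum_congr rfl fun i _ => ?_
    simp [extend]
  · simp

lemma wt_extend_eq {m : ℕ} {c : Fin (2*m-1) → Bool} (hc : wt c = m - 1 ∨ wt c = m) :
    wt (extend m c) = m := by
  rcases Nat.eq_zero_or_pos m with rfl | hm
  · simp [wt]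
  rw [wt_extend hm]
  rcases hc with h | h <;> simp only [h] <;> split_ifs <;> omega

theorem stmt15_general (m d : ℕ) (C : Set (Fin (2*m-1) → Bool))
    (hcyc : ∀ x ∈ C, ∀ i, cyc x i ∈ C)
    (hd : ∀ x ∈ C, ∀ y ∈ C, x ≠ y → d ≤ hammingDist x y) :
    ∀ x ∈ C, ∀ τx, (TCmem m x τx ∧ ∀ j, TCmem m x j → τx ≤ j) →
      wt (extend m (Flip (cyc x τx) m)) = m ∧
      ∀ y ∈ C, ∀ τy, (TCmem m y τy ∧ ∀ j, TCmem m y j → τy ≤ j) →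
        extend m (Flip (cyc x τx) m) ≠ extend m (Flip (cyc y τy) m) →
        2 * ((d + 1) / 2) ≤
          hammingDist (extend m (Flip (cyc x τx) m)) (extend m (Flip (cyc y τy) m)) := by
  rintro x hx τx ⟨⟨-, hwx⟩, -⟩
  have hbx := wt_extend_eq hwx
  refine ⟨hbx, ?_⟩
  rintro y hy τy ⟨⟨-, hwy⟩, -⟩ hne
  have hshift : cyc x τx ≠ cyc y τy := fun h => hne (by rw [h])
  have hdist : d ≤ hammingDist (extend m (Flip (cyc x τx) m)) (extend m (Flip (cyc y τy) m)) :=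
    calc d ≤ hammingDist (cyc x τx) (cyc y τy) := hd _ (hcyc x hx τx) _ (hcyc y hy τy) hshift
      _ = hammingDist (Flip (cyc x τx) m) (Flip (cyc y τy) m) := (hammingDist_flip _ _ _).symm
      _ ≤ _ := hammingDist_le_hammingDist_extend _ _ _
  obtain ⟨r, hr⟩ := even_hammingDist_of_wt_eq (hbx.trans (wt_extend_eq hwy).symm)
  omega

/-- if `C ⊆ {0,1}^{n−1}` is linear, closed under cyclic shifts,
and distinct codewords are at Hamming distance at least `d`, then the encoding
`x ↦ c'(x) = extend (Flip_c(σ(x, min T_C(x))))` produces balanced words of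
length `n = 2m`, and distinct encoded words are at distance at least `2⌈d/2⌉`. -/
theorem stmt15 (m d : ℕ) (C : Set (Fin (2*m-1) → Bool))
    (hlin : ∀ x ∈ C, ∀ y ∈ C, (fun i => xor (x i) (y i)) ∈ C)
    (hcyc : ∀ x ∈ C, ∀ i, cyc x i ∈ C)
    (hd : ∀ x ∈ C, ∀ y ∈ C, x ≠ y → d ≤ hammingDist x y) :
    ∀ x ∈ C, ∀ τx, (TCmem m x τx ∧ ∀ j, TCmem m x j → τx ≤ j) →
      wt (extend m (Flip (cyc x τx) m)) = m ∧
      ∀ y ∈ C, ∀ τy, (TCmem m y τy ∧ ∀ j, TCmem m y j → τy ≤ j) →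
        extend m (Flip (cyc x τx) m) ≠ extend m (Flip (cyc y τy) m) →
        2 * ((d + 1) / 2) ≤
          hammingDist (extend m (Flip (cyc x τx) m)) (extend m (Flip (cyc y τy) m)) :=
  stmt15_general m d C hcyc hd
end
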